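/- arXiv:2303.12051 — 2 statements merged into one kernel-verified Lean document; each statement's English description precedes it below -/
import Mathlib

section
/- Assume UᵀU = I_d, and that min_{O∈O_d} ‖H − O‖ ≤ 8C₀(1 + σ√d)/(7√(np)), ‖UH − U*‖ ≤ 8C₀(1 + σ√d)/(7√(np)), and ‖UUᵀ − U*U*ᵀ‖ ≤ 8C₀(1 + σ√d)/(7√(np)), where O_d is the set of d×d orthogonal matrices. If np/(√d + σd)² ≥ 32C₀², then min_{P∈Π_d} ‖M − PHᵀ‖_F ≤ 4C₀(√d + σd)/√(np). -/
open Matrix Real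

/-- The spectral (ℓ2 operator) norm of a real matrix: the supremum of `‖A x‖₂`
over vectors `x` with `‖x‖₂ ≤ 1`. -/
noncomputable def specNorm {m n : Type*} [Fintype m] [Fintype n]
    (A : Matrix m n ℝ) : ℝ :=
  sSup {c : ℝ | ∃ x : n → ℝ, (∑ j, (x j) ^ 2) ≤ 1 ∧
    c = Real.sqrt (∑ i, (∑ j, A i j * x j) ^ 2)}

/-- The Frobenius norm of a real matrix. -/
noncomputable def frobNorm {m n : Type*} [Fintype m] [Fintype n]
    (A : Matrix m n ℝ) : ℝ :=
  Real.sqrt (∑ i, ∑ j, (A i j) ^ 2)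

/-- `P` is a `d × d` permutation matrix. -/
def IsPermMatrix {d : ℕ} (P : Matrix (Fin d) (Fin d) ℝ) : Prop :=
  ∃ τ : Equiv.Perm (Fin d), ∀ i j, P i j = if τ i = j then 1 else 0

namespace Stmt6Aux

variable {m k : Type*} [Fintype m] [Fintype k]

noncomputable def l2 (f : k → ℝ) : ℝ := Real.sqrt (∑ x, f x ^ 2)

lemma sum_sq_nonneg (f : k → ℝ) : 0 ≤ ∑ x, f x ^ 2 :=
  Finset.sum_nonneg fun _ _ => sq_nonneg _

lemma l2_nonneg (f : k → ℝ) : 0 ≤ l2 f := Real.sqrt_nonneg _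

lemma l2_sq (f : k → ℝ) : l2 f ^ 2 = ∑ x, f x ^ 2 := Real.sq_sqrt (sum_sq_nonneg f)

lemma cs (f g : k → ℝ) : (∑ x, f x * g x) ≤ l2 f * l2 g := by
  rcases le_or_gt (∑ x, f x * g x) 0 with h | h
  · exact h.trans (mul_nonneg (l2_nonneg f) (l2_nonneg g))
  · have h2 : (∑ x, f x * g x) ^ 2 ≤ (l2 f * l2 g) ^ 2 := by
      rw [mul_pow, l2_sq, l2_sq]; exact Finset.sum_mul_sq_le_sq_mul_sq Finset.univ f g
    calc (∑ x, f x * g x) = Real.sqrt ((∑ x, f x * g x) ^ 2) := (Real.sqrt_sq h.le).symm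
      _ ≤ Real.sqrt ((l2 f * l2 g) ^ 2) := Real.sqrt_le_sqrt h2
      _ = l2 f * l2 g := Real.sqrt_sq (mul_nonneg (l2_nonneg f) (l2_nonneg g))

lemma l2_add (f g : k → ℝ) : l2 (fun x => f x + g x) ≤ l2 f + l2 g := by
  have h2 : (∑ x, (f x + g x) ^ 2) ≤ (l2 f + l2 g) ^ 2 := by
    have := cs f g
    have e1 := l2_sq f; have e2 := l2_sq g
    have h3 : ∑ x, (f x + g x) ^ 2 = (∑ x, f x ^ 2) + 2 * (∑ x, f x * g x) + ∑ x, g x ^ 2 := by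
      rw [Finset.mul_sum, ← Finset.sum_add_distrib, ← Finset.sum_add_distrib]
      exact Finset.sum_congr rfl fun x _ => by ring
    nlinarith [cs f g, l2_nonneg f, l2_nonneg g]
  calc l2 (fun x => f x + g x) ≤ Real.sqrt ((l2 f + l2 g) ^ 2) := Real.sqrt_le_sqrt h2
    _ = l2 f + l2 g := Real.sqrt_sq (add_nonneg (l2_nonneg f) (l2_nonneg g))

lemma l2_smul (t : ℝ) (ht : 0 ≤ t) (f : k → ℝ) : l2 (fun x => t * f x) = t * l2 f := by
  unfold l2
  rw [← Real.sqrt_sq ht, ← Real.sqrt_mul (sq_nonneg t), Real.sqrt_sq ht]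
  · congr 1; rw [Finset.mul_sum]; congr 1; funext x; ring

-- spectral norm facts
lemma specNorm_bddAbove (A : Matrix m k ℝ) :
    BddAbove {c : ℝ | ∃ x : k → ℝ, (∑ j, (x j) ^ 2) ≤ 1 ∧
      c = Real.sqrt (∑ i, (∑ j, A i j * x j) ^ 2)} := by
  refine ⟨Real.sqrt (∑ i, ∑ j, A i j ^ 2), ?_⟩
  rintro c ⟨x, hx, rfl⟩
  apply Real.sqrt_le_sqrt
  apply Finset.sum_le_sum
  intro i _
  calc (∑ j, A i j * x j) ^ 2 ≤ (∑ j, A i j ^ 2) * ∑ j, x j ^ 2 :=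
        Finset.sum_mul_sq_le_sq_mul_sq Finset.univ _ _
    _ ≤ (∑ j, A i j ^ 2) * 1 := by
        exact mul_le_mul_of_nonneg_left hx (sum_sq_nonneg _)
    _ = ∑ j, A i j ^ 2 := mul_one _

lemma specNorm_nonneg (A : Matrix m k ℝ) : 0 ≤ specNorm A := by
  apply le_csSup (specNorm_bddAbove A)
  exact ⟨fun _ => 0, by simp, by simp⟩

lemma le_specNorm (A : Matrix m k ℝ) (x : k → ℝ) :
    Real.sqrt (∑ i, (∑ j, A i j * x j) ^ 2) ≤ specNorm A * Real.sqrt (∑ j, x j ^ 2) := by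
  rcases eq_or_lt_of_le (sum_sq_nonneg x) with h0 | h0
  · have hx0 : ∀ j : k, x j = 0 := by
      intro j
      have h1 := (Finset.sum_eq_zero_iff_of_nonneg (fun i _ => sq_nonneg (x i))).mp h0.symm
      exact pow_eq_zero_iff (n := 2) (by norm_num) |>.mp (h1 j (Finset.mem_univ j))
    have : ∀ i : m, (∑ j, A i j * x j) = 0 := fun i => Finset.sum_eq_zero fun j _ => by
      rw [hx0 j, mul_zero]
    calc Real.sqrt (∑ i, (∑ j, A i j * x j) ^ 2) = 0 := by simp [this]
      _ ≤ _ := mul_nonneg (specNorm_nonneg A) (Real.sqrt_nonneg _)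
  · set t := Real.sqrt (∑ j, x j ^ 2) with ht
    have htpos : 0 < t := Real.sqrt_pos.mpr h0
    set y : k → ℝ := fun j => x j / t with hy
    have hy1 : (∑ j, y j ^ 2) ≤ 1 := by
      have : (∑ j, y j ^ 2) = (∑ j, x j ^ 2) / t ^ 2 := by
        rw [Finset.sum_div]; exact Finset.sum_congr rfl fun j _ => by rw [hy]; ring
      rw [this, Real.sq_sqrt h0.le, div_self (ne_of_gt h0)]
    have hmem : Real.sqrt (∑ i, (∑ j, A i j * y j) ^ 2) ≤ specNorm A :=
      le_csSup (specNorm_bddAbove A) ⟨y, hy1, rfl⟩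
    have hfact : Real.sqrt (∑ i, (∑ j, A i j * x j) ^ 2)
        = t * Real.sqrt (∑ i, (∑ j, A i j * y j) ^ 2) := by
      rw [← Real.sqrt_sq htpos.le, ← Real.sqrt_mul (sq_nonneg t)]
      congr 1
      rw [Finset.mul_sum]
      refine Finset.sum_congr rfl fun i _ => ?_
      have : (∑ j, A i j * y j) = (∑ j, A i j * x j) / t := by
        rw [Finset.sum_div]; exact Finset.sum_congr rfl fun j _ => by rw [hy]; ring
      rw [this]; field_simp
    rw [hfact, mul_comm]
    exact mul_le_mul_of_nonneg_right hmem htpos.le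

lemma l2_triangle (f g h : k → ℝ) :
    l2 (fun x => f x - h x) ≤ l2 (fun x => f x - g x) + l2 (fun x => g x - h x) := by
  have e : (fun x => f x - h x) = fun x => (f x - g x) + (g x - h x) := by
    funext x; ring
  rw [e]; exact l2_add _ _

lemma l2_sub_comm (f g : k → ℝ) :
    l2 (fun x => f x - g x) = l2 (fun x => g x - f x) := by
  unfold l2; congr 1; exact Finset.sum_congr rfl fun x _ => by ring

lemma sum_sq_mulVec_le (A : Matrix m k ℝ) {e : ℝ} (hA : specNorm A ≤ e) (x : k → ℝ) :
    ∑ i, (∑ j, A i j * x j) ^ 2 ≤ e ^ 2 * ∑ j, x j ^ 2 := by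
  have h := (le_specNorm A x).trans
    (mul_le_mul_of_nonneg_right hA (Real.sqrt_nonneg _))
  have h2 := pow_le_pow_left₀ (Real.sqrt_nonneg _) h 2
  rw [Real.sq_sqrt (sum_sq_nonneg _), mul_pow, Real.sq_sqrt (sum_sq_nonneg _)] at h2
  exact h2

lemma orth_mulVec [DecidableEq k] (O : Matrix k k ℝ) (hO : Oᵀ * O = 1) (v : k → ℝ) :
    ∑ i, (∑ j, O i j * v j) ^ 2 = ∑ j, v j ^ 2 := by
  have hOO : ∀ j l, (∑ i, O i j * O i l) = if j = l then (1:ℝ) else 0 := by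
    intro j l
    have := congrFun (congrFun hO j) l
    simpa [Matrix.mul_apply, Matrix.transpose_apply, Matrix.one_apply] using this
  calc ∑ i, (∑ j, O i j * v j) ^ 2
      = ∑ i, ∑ j, ∑ l, (O i j * O i l) * (v j * v l) := by
        refine Finset.sum_congr rfl fun i _ => ?_
        rw [sq, Finset.sum_mul_sum]
        exact Finset.sum_congr rfl fun j _ => Finset.sum_congr rfl fun l _ => by ring
    _ = ∑ j, ∑ l, (∑ i, O i j * O i l) * (v j * v l) := by
        rw [Finset.sum_comm]
        refine Finset.sum_congr rfl fun j _ => ?_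
        rw [Finset.sum_comm]
        refine Finset.sum_congr rfl fun l _ => ?_
        rw [Finset.sum_mul]
    _ = ∑ j, ∑ l, (if j = l then (1:ℝ) else 0) * (v j * v l) := by
        simp_rw [hOO]
    _ = ∑ j, v j ^ 2 := by
        refine Finset.sum_congr rfl fun j _ => ?_
        simp [ite_mul, sq]

end Stmt6Aux

open Stmt6Aux

set_option maxHeartbeats 1000000

/-- Lemma on the k-means centers: under the spectral bounds on `H`,
`UH − U*`, `UUᵀ − U*U*ᵀ`, and `np/(√d + σd)² ≥ 32C₀²`, the matrix `M` of (scaled)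
optimal k-means centers of the rows of `U` satisfies
`min_{P ∈ Π_d} ‖M − PHᵀ‖_F ≤ 4C₀(√d + σd)/√(np)`. -/
theorem stmt_6 (n d : ℕ) (hn : 2 ≤ n) (hd : 2 ≤ d)
    (p σ C₀ : ℝ) (hp : 0 < p) (hp1 : p < 1) (hσ : 0 ≤ σ) (hC₀ : 0 < C₀)
    (U : Matrix (Fin n × Fin d) (Fin d) ℝ) (hUorth : Uᵀ * U = 1)
    (Ustar : Matrix (Fin n × Fin d) (Fin d) ℝ)
    (hUstar : ∀ q b, Ustar q b = (if q.2 = b then (1 : ℝ) else 0) / Real.sqrt n)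
    (H : Matrix (Fin d) (Fin d) ℝ) (hH : H = Uᵀ * Ustar)
    -- hypotheses (5): the spectral bounds
    (hHO : ∃ O : Matrix (Fin d) (Fin d) ℝ, Oᵀ * O = 1 ∧
      specNorm (H - O) ≤ 8 * C₀ * (1 + σ * Real.sqrt d) / (7 * Real.sqrt (n * p)))
    (hUH : specNorm (U * H - Ustar) ≤ 8 * C₀ * (1 + σ * Real.sqrt d) / (7 * Real.sqrt (n * p)))
    (hUUt : specNorm (U * Uᵀ - Ustar * Ustarᵀ)
      ≤ 8 * C₀ * (1 + σ * Real.sqrt d) / (7 * Real.sqrt (n * p)))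
    -- `(ẑ, μ̂)` is a global minimizer of the k-means objective on the rows of `U`
    (zhat : Fin n × Fin d → Fin d) (muhat : Fin d → Fin d → ℝ)
    (hkmeans : ∀ (z : Fin n × Fin d → Fin d) (mu : Fin d → Fin d → ℝ),
      ∑ i, ∑ c, (U i c - muhat (zhat i) c) ^ 2 ≤ ∑ i, ∑ c, (U i c - mu (z i) c) ^ 2)
    (M : Matrix (Fin d) (Fin d) ℝ)
    (hM : ∀ a b, M a b = Real.sqrt n * muhat a b)
    -- the sample-size condition
    (hcond : n * p / (Real.sqrt d + σ * d) ^ 2 ≥ 32 * C₀ ^ 2) :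
    ∃ P : Matrix (Fin d) (Fin d) ℝ, IsPermMatrix P ∧
      frobNorm (M - P * Hᵀ) ≤ 4 * C₀ * (Real.sqrt d + σ * d) / Real.sqrt (n * p) := by
  classical
  obtain ⟨O, hOorth, hOspec⟩ := hHO
  -- basic positivity facts
  have hn2 : (2:ℝ) ≤ (n:ℝ) := by exact_mod_cast hn
  have hd2 : (2:ℝ) ≤ (d:ℝ) := by exact_mod_cast hd
  have hn0 : (0:ℝ) < n := by linarith
  have hd0 : (0:ℝ) < d := by linarith
  have hnp : (0:ℝ) < n * p := mul_pos hn0 hp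
  have hsnp : 0 < Real.sqrt (n * p) := Real.sqrt_pos.mpr hnp
  have hsd : 0 < Real.sqrt d := Real.sqrt_pos.mpr hd0
  have hsn : 0 < Real.sqrt n := Real.sqrt_pos.mpr hn0
  have hds : Real.sqrt d * Real.sqrt d = (d:ℝ) := Real.mul_self_sqrt hd0.le
  have hs2 : (0:ℝ) < Real.sqrt 2 := Real.sqrt_pos.mpr (by norm_num)
  have h2s : Real.sqrt 2 * Real.sqrt 2 = 2 := Real.mul_self_sqrt (by norm_num)
  have hsd2 : Real.sqrt 2 ≤ Real.sqrt d := Real.sqrt_le_sqrt hd2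
  set ε : ℝ := 8 * C₀ * (1 + σ * Real.sqrt d) / (7 * Real.sqrt (n * p)) with hεdef
  have hεnn : 0 ≤ ε := by positivity
  set s : ℝ := Real.sqrt d + σ * d with hsdef
  have hs0 : 0 < s := by positivity
  -- np ≥ 32 C₀² s², hence √(np) ≥ 4√2 C₀ s
  have h32 : 32 * C₀ ^ 2 * s ^ 2 ≤ (n:ℝ) * p := by
    rw [ge_iff_le, le_div_iff₀ (by positivity)] at hcond
    linarith
  have hsnp_ge : 4 * Real.sqrt 2 * C₀ * s ≤ Real.sqrt ((n:ℝ) * p) := by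
    rw [show (4 * Real.sqrt 2 * C₀ * s) = Real.sqrt ((4 * Real.sqrt 2 * C₀ * s)^2) from
      (Real.sqrt_sq (by positivity)).symm]
    apply Real.sqrt_le_sqrt
    have e : (4 * Real.sqrt 2 * C₀ * s) ^ 2 = 32 * C₀ ^ 2 * s ^ 2 := by
      linear_combination (16 * C₀ ^ 2 * s ^ 2) * h2s
    linarith [e, h32]
  -- A = √d * ε and its bounds
  have hA : Real.sqrt d * ε = 8 * C₀ * s / (7 * Real.sqrt ((n:ℝ) * p)) := by
    rw [hεdef, hsdef]
    rw [mul_div_assoc']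
    congr 1
    linear_combination (8 * C₀ * σ) * hds
  set A : ℝ := Real.sqrt d * ε with hAdef
  have hAnn : 0 ≤ A := mul_nonneg hsd.le hεnn
  have hA27 : A ≤ Real.sqrt 2 / 7 := by
    rw [hA, div_le_div_iff₀ (by positivity) (by norm_num)]
    have h1 : 7 * Real.sqrt 2 * (4 * Real.sqrt 2 * C₀ * s)
        ≤ 7 * Real.sqrt 2 * Real.sqrt ((n:ℝ) * p) :=
      mul_le_mul_of_nonneg_left hsnp_ge (by positivity)
    have h2 : 7 * Real.sqrt 2 * (4 * Real.sqrt 2 * C₀ * s) = 56 * C₀ * s := by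
      linear_combination (28 * C₀ * s) * h2s
    linarith
  have hε17 : ε ≤ 1 / 7 := by
    have h1 : Real.sqrt 2 * ε ≤ Real.sqrt d * ε := mul_le_mul_of_nonneg_right hsd2 hεnn
    nlinarith [hA27, hs2, h2s]
  have hA2d : A ^ 2 = (d:ℝ) * ε ^ 2 := by
    rw [hAdef]; linear_combination (ε ^ 2) * hds
  -- the centers
  set c : Fin d → Fin d → ℝ := fun a x => H x a / Real.sqrt n with hc
  -- matrix identity: U - Ustar Hᵀ = (UUᵀ - U*U*ᵀ) U
  have hHt : Hᵀ = Ustarᵀ * U := by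
    rw [hH, Matrix.transpose_mul, Matrix.transpose_transpose]
  have hmat : U - Ustar * Hᵀ = (U * Uᵀ - Ustar * Ustarᵀ) * U := by
    rw [Matrix.sub_mul, Matrix.mul_assoc, hUorth, Matrix.mul_one, Matrix.mul_assoc, ← hHt]
  have hentry : ∀ (q : Fin n × Fin d) (x : Fin d),
      U q x - c q.2 x = ((U * Uᵀ - Ustar * Ustarᵀ) * U) q x := by
    intro q x
    rw [← hmat, Matrix.sub_apply, hc]
    congr 1
    rw [Matrix.mul_apply]
    simp only [hUstar, Matrix.transpose_apply]
    have h' : ∑ j, (if q.2 = j then (1:ℝ) else 0) / Real.sqrt n * H x j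
        = H x q.2 / Real.sqrt n := by
      rw [Finset.sum_congr rfl (fun j _ =>
        show (if q.2 = j then (1:ℝ) else 0) / Real.sqrt n * H x j
            = (if q.2 = j then H x j else 0) / Real.sqrt n from by
          rw [div_mul_eq_mul_div, ite_mul, one_mul, zero_mul]),
        ← Finset.sum_div, Finset.sum_ite_eq, if_pos (Finset.mem_univ _)]
    rw [h']
  -- unit columns of U
  have hcolU : ∀ x : Fin d, ∑ q, U q x ^ 2 = 1 := by
    intro x
    have h := congrFun (congrFun hUorth x) x
    simpa [Matrix.mul_apply, Matrix.transpose_apply, Matrix.one_apply, sq] using h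
  -- key sums
  set F : ℝ := ∑ q : Fin n × Fin d, ∑ x, (U q x - c q.2 x) ^ 2 with hFdef
  set L : ℝ := ∑ q : Fin n × Fin d, ∑ x, (U q x - muhat (zhat q) x) ^ 2 with hLdef
  set DD : ℝ := ∑ q : Fin n × Fin d, ∑ x, (muhat (zhat q) x - c q.2 x) ^ 2 with hDDdef
  have hF : F ≤ A ^ 2 := by
    have hstep : F = ∑ x : Fin d, ∑ q, (∑ j, (U * Uᵀ - Ustar * Ustarᵀ) q j * U j x) ^ 2 := by
      rw [hFdef, Finset.sum_comm]
      exact Finset.sum_congr rfl fun x _ => Finset.sum_congr rfl fun q _ => by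
        rw [hentry q x, Matrix.mul_apply]
    rw [hstep, hA2d]
    calc ∑ x : Fin d, ∑ q, (∑ j, (U * Uᵀ - Ustar * Ustarᵀ) q j * U j x) ^ 2
        ≤ ∑ x : Fin d, ε ^ 2 * 1 := by
          refine Finset.sum_le_sum fun x _ => ?_
          have h := Stmt6Aux.sum_sq_mulVec_le (U * Uᵀ - Ustar * Ustarᵀ) hUUt (fun j => U j x)
          rw [hcolU x] at h
          exact h
      _ = (d:ℝ) * ε ^ 2 := by
          rw [Finset.sum_const, Finset.card_univ, Fintype.card_fin, nsmul_eq_mul, mul_one]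
  have hL : L ≤ F := by
    have h := hkmeans Prod.snd c
    exact h
  have hDD4 : DD ≤ 4 * A ^ 2 := by
    have h1 : DD ≤ ∑ q : Fin n × Fin d, ∑ x,
        (2 * (U q x - muhat (zhat q) x) ^ 2 + 2 * (U q x - c q.2 x) ^ 2) := by
      refine Finset.sum_le_sum fun q _ => Finset.sum_le_sum fun x _ => ?_
      nlinarith [sq_nonneg ((U q x - muhat (zhat q) x) + (U q x - c q.2 x)),
        sq_nonneg ((U q x - muhat (zhat q) x) - (U q x - c q.2 x))]
    have h2 : ∑ q : Fin n × Fin d, ∑ x,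
        (2 * (U q x - muhat (zhat q) x) ^ 2 + 2 * (U q x - c q.2 x) ^ 2)
        = 2 * L + 2 * F := by
      rw [hLdef, hFdef, Finset.mul_sum, Finset.mul_sum, ← Finset.sum_add_distrib]
      refine Finset.sum_congr rfl fun q _ => ?_
      rw [Finset.mul_sum, Finset.mul_sum, ← Finset.sum_add_distrib]
    rw [h2] at h1
    linarith
  -- regroup DD by the true label
  have hDDsplit : DD = ∑ a : Fin d, ∑ i : Fin n, ∑ x, (muhat (zhat (i, a)) x - c a x) ^ 2 := by
    rw [hDDdef, Fintype.sum_prod_type, Finset.sum_comm]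
  -- separation of the ideal centers
  have hsep : ∀ a b : Fin d, a ≠ b →
      Real.sqrt 2 * (1 - ε) / Real.sqrt n ≤ Stmt6Aux.l2 (fun x => c a x - c b x) := by
    intro a b hab
    set v : Fin d → ℝ := fun j => (if a = j then (1:ℝ) else 0) - (if b = j then 1 else 0) with hv
    have hv2 : ∑ j, v j ^ 2 = 2 := by
      have hterm : ∀ j, v j ^ 2 = (if a = j then (1:ℝ) else 0) + (if b = j then 1 else 0)
          - 2 * ((if a = j then (1:ℝ) else 0) * (if b = j then 1 else 0)) := by
        intro j
        by_cases h1 : a = j <;> by_cases h2 : b = j <;> simp [hv, h1, h2] <;> ring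
      have hcross : ∑ j, (if a = j then (1:ℝ) else 0) * (if b = j then 1 else 0) = 0 := by
        rw [Finset.sum_congr rfl (fun j _ =>
          show (if a = j then (1:ℝ) else 0) * (if b = j then 1 else 0)
              = if a = j then (if b = j then (1:ℝ) else 0) else 0 from by
            by_cases h1 : a = j <;> simp [h1]),
          Finset.sum_ite_eq, if_pos (Finset.mem_univ _), if_neg (fun h => hab h.symm)]
      simp only [hterm, Finset.sum_sub_distrib, Finset.sum_add_distrib, Finset.sum_ite_eq,
        if_pos (Finset.mem_univ a), if_pos (Finset.mem_univ b)]
      rw [← Finset.mul_sum, hcross]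
      norm_num
    have hHv : ∀ x, c a x - c b x = (1 / Real.sqrt n) * ∑ j, H x j * v j := by
      intro x
      have : ∑ j, H x j * v j = H x a - H x b := by
        simp only [hv, mul_sub, Finset.sum_sub_distrib, mul_ite, mul_one, mul_zero,
          Finset.sum_ite_eq, if_pos (Finset.mem_univ _)]
      rw [this, hc]
      field_simp
    -- l2 of Hv
    have hOv : Stmt6Aux.l2 (fun x => ∑ j, O x j * v j) = Real.sqrt 2 := by
      unfold Stmt6Aux.l2
      rw [Stmt6Aux.orth_mulVec O hOorth v, hv2]
    have hdiff : Stmt6Aux.l2 (fun x => (∑ j, O x j * v j) - ∑ j, H x j * v j)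
        ≤ ε * Real.sqrt 2 := by
      have he : (fun x => (∑ j, O x j * v j) - ∑ j, H x j * v j)
          = fun x => ∑ j, (H - O) x j * (-v) j := by
        funext x
        rw [← Finset.sum_sub_distrib]
        refine Finset.sum_congr rfl fun j _ => ?_
        simp [Matrix.sub_apply]
        ring
      rw [he]
      unfold Stmt6Aux.l2
      have h := Stmt6Aux.sum_sq_mulVec_le (H - O) hOspec (fun j => (-v) j)
      have hv2' : ∑ j, ((-v) j) ^ 2 = 2 := by
        rw [← hv2]; exact Finset.sum_congr rfl fun j _ => by simp
      rw [hv2'] at h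
      calc Real.sqrt (∑ x, (∑ j, (H - O) x j * (-v) j) ^ 2) ≤ Real.sqrt (ε ^ 2 * 2) :=
            Real.sqrt_le_sqrt h
        _ = ε * Real.sqrt 2 := by
            rw [Real.sqrt_mul (sq_nonneg ε), Real.sqrt_sq hεnn]
    have htri : Stmt6Aux.l2 (fun x => ∑ j, O x j * v j)
        ≤ Stmt6Aux.l2 (fun x => ∑ j, H x j * v j)
          + Stmt6Aux.l2 (fun x => (∑ j, O x j * v j) - ∑ j, H x j * v j) := by
      have he : (fun x => ∑ j, O x j * v j)
          = fun x => (∑ j, H x j * v j) + ((∑ j, O x j * v j) - ∑ j, H x j * v j) := by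
        funext x; ring
      calc Stmt6Aux.l2 (fun x => ∑ j, O x j * v j)
          = Stmt6Aux.l2 (fun x => (∑ j, H x j * v j)
              + ((∑ j, O x j * v j) - ∑ j, H x j * v j)) := by rw [← he]
        _ ≤ _ := Stmt6Aux.l2_add _ _
    have hHv2 : Real.sqrt 2 * (1 - ε) ≤ Stmt6Aux.l2 (fun x => ∑ j, H x j * v j) := by
      rw [hOv] at htri
      have he2 : Real.sqrt 2 * (1 - ε) = Real.sqrt 2 - ε * Real.sqrt 2 := by ring
      rw [he2]
      linarith [htri, hdiff]
    have hfin : Stmt6Aux.l2 (fun x => c a x - c b x)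
        = (1 / Real.sqrt n) * Stmt6Aux.l2 (fun x => ∑ j, H x j * v j) := by
      have he : (fun x => c a x - c b x) = fun x => (1 / Real.sqrt n) * ∑ j, H x j * v j := by
        funext x; exact hHv x
      rw [he, Stmt6Aux.l2_smul _ (by positivity)]
    rw [hfin, div_eq_mul_one_div, mul_comm (Real.sqrt 2 * (1 - ε))]
    exact mul_le_mul_of_nonneg_left hHv2 (by positivity)
  -- per-label sums are bounded by DD ≤ 4A²
  have hDDa : ∀ a : Fin d, ∑ i : Fin n, ∑ x, (muhat (zhat (i, a)) x - c a x) ^ 2 ≤ 4 * A ^ 2 := by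
    intro a
    have h1 : ∑ i : Fin n, ∑ x, (muhat (zhat (i, a)) x - c a x) ^ 2 ≤ DD := by
      rw [hDDsplit]
      exact Finset.single_le_sum
        (f := fun a => ∑ i : Fin n, ∑ x, (muhat (zhat (i, a)) x - c a x) ^ 2)
        (fun a _ => Finset.sum_nonneg fun i _ => Stmt6Aux.sum_sq_nonneg _) (Finset.mem_univ a)
    linarith
  -- existence of a nearby k-means center for each ideal center
  have hex : ∀ a : Fin d, ∃ b : Fin d, ∑ x, (muhat b x - c a x) ^ 2 ≤ 4 * A ^ 2 / n := by
    intro a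
    by_contra hcon
    push_neg at hcon
    have hlt : ∀ i : Fin n, 4 * A ^ 2 / (n:ℝ) < ∑ x, (muhat (zhat (i, a)) x - c a x) ^ 2 :=
      fun i => hcon _
    have hsum : (n:ℝ) * (4 * A ^ 2 / n) < ∑ i : Fin n, ∑ x, (muhat (zhat (i, a)) x - c a x) ^ 2 := by
      have h := Finset.sum_lt_sum_of_nonempty (s := (Finset.univ : Finset (Fin n)))
        (f := fun _ => 4 * A ^ 2 / (n:ℝ))
        ⟨⟨0, by omega⟩, Finset.mem_univ _⟩ (fun i _ => hlt i)
      rwa [Finset.sum_const, Finset.card_univ, Fintype.card_fin, nsmul_eq_mul] at h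
    have hcanc : (n:ℝ) * (4 * A ^ 2 / n) = 4 * A ^ 2 := by field_simp
    rw [hcanc] at hsum
    linarith [hDDa a]
  choose τ hτ using hex
  -- l2 form of the approximation property
  have hsqrt4A : Real.sqrt (4 * A ^ 2 / n) = 2 * A / Real.sqrt n := by
    rw [show 4 * A ^ 2 / (n:ℝ) = (2 * A / Real.sqrt n) ^ 2 from by
      rw [div_pow, Real.sq_sqrt hn0.le]; ring,
      Real.sqrt_sq (by positivity)]
  have hτl2 : ∀ a : Fin d, Stmt6Aux.l2 (fun x => muhat (τ a) x - c a x)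
      ≤ 2 * A / Real.sqrt n := by
    intro a
    exact (Real.sqrt_le_sqrt (hτ a)).trans_eq hsqrt4A
  -- τ is injective, hence bijective
  have hε2 : Real.sqrt 2 * ε ≤ Real.sqrt 2 * (1/7) := mul_le_mul_of_nonneg_left hε17 hs2.le
  have hinj : Function.Injective τ := by
    intro a b hab2
    by_contra hne
    have h1 := hsep a b hne
    have htri := Stmt6Aux.l2_triangle (fun x => c a x) (fun x => muhat (τ a) x) (fun x => c b x)
    have ha' : Stmt6Aux.l2 (fun x => c a x - muhat (τ a) x) ≤ 2 * A / Real.sqrt n := by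
      rw [Stmt6Aux.l2_sub_comm]; exact hτl2 a
    have hb' : Stmt6Aux.l2 (fun x => muhat (τ a) x - c b x) ≤ 2 * A / Real.sqrt n := by
      rw [hab2]; exact hτl2 b
    have h2 : Real.sqrt 2 * (1 - ε) / Real.sqrt n ≤ 4 * A / Real.sqrt n := by
      calc Real.sqrt 2 * (1 - ε) / Real.sqrt n ≤ Stmt6Aux.l2 (fun x => c a x - c b x) := h1
        _ ≤ _ := htri
        _ ≤ 2 * A / Real.sqrt n + 2 * A / Real.sqrt n := add_le_add ha' hb'
        _ = 4 * A / Real.sqrt n := by ring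
    have h3 : Real.sqrt 2 * (1 - ε) ≤ 4 * A := (div_le_div_iff_of_pos_right hsn).mp h2
    nlinarith only [h3, hA27, hs2, hε2]
  have hbij : Function.Bijective τ := Finite.injective_iff_bijective.mp hinj
  set e : Fin d ≃ Fin d := Equiv.ofBijective τ hbij with hedef
  have hesymm : ∀ b, τ (e.symm b) = b := fun b => e.apply_symm_apply b
  -- lower bound for distances to wrong centers
  set β : ℝ := Real.sqrt 2 * (1 - ε) - 2 * A with hβdef
  have hβ47 : 4 * Real.sqrt 2 / 7 ≤ β := by
    rw [hβdef]
    nlinarith only [hε2, hA27, hs2]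
  have hβ0 : 0 ≤ β := le_trans (by positivity) hβ47
  have hwrongsq : ∀ a b : Fin d, b ≠ τ a →
      β ^ 2 / (n:ℝ) ≤ ∑ x, (muhat b x - c a x) ^ 2 := by
    intro a b hb
    have ha'ne : e.symm b ≠ a := by
      intro h; exact hb (h ▸ (hesymm b).symm)
    have h1 := hsep a (e.symm b) (fun h => ha'ne h.symm)
    have htri := Stmt6Aux.l2_triangle (fun x => c a x) (fun x => muhat b x)
      (fun x => c (e.symm b) x)
    have hb' : Stmt6Aux.l2 (fun x => muhat b x - c (e.symm b) x) ≤ 2 * A / Real.sqrt n := by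
      have := hτl2 (e.symm b)
      rwa [hesymm b] at this
    have h2 : β / Real.sqrt n ≤ Stmt6Aux.l2 (fun x => muhat b x - c a x) := by
      rw [← Stmt6Aux.l2_sub_comm]
      have : Real.sqrt 2 * (1 - ε) / Real.sqrt n
          ≤ Stmt6Aux.l2 (fun x => c a x - muhat b x) + 2 * A / Real.sqrt n :=
        h1.trans (htri.trans (add_le_add_right hb' _))
      rw [hβdef, sub_div]
      linarith
    have h3 := pow_le_pow_left₀ (by positivity) h2 2
    rw [Stmt6Aux.l2_sq] at h3
    calc β ^ 2 / (n:ℝ) = (β / Real.sqrt n) ^ 2 := by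
          rw [div_pow, Real.sq_sqrt hn0.le]
      _ ≤ _ := h3
  -- quantitative facts
  have hβsq : 32 / 49 ≤ β ^ 2 := by nlinarith only [hβ47, h2s, hs2, hβ0]
  have hA2le : A ^ 2 ≤ 2 / 49 := by nlinarith only [hA27, h2s, hs2, hAnn]
  -- counting misclassified points
  have hcount : ∀ a : Fin d,
      ((Finset.univ.filter fun i : Fin n => zhat (i, a) ≠ τ a).card : ℝ) ≤ (n:ℝ) / 4 := by
    intro a
    set T := Finset.univ.filter fun i : Fin n => zhat (i, a) ≠ τ a with hT
    have h1 : (T.card : ℝ) * (β ^ 2 / n) ≤ ∑ i : Fin n, ∑ x, (muhat (zhat (i, a)) x - c a x) ^ 2 := by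
      calc (T.card : ℝ) * (β ^ 2 / n) = ∑ _i ∈ T, β ^ 2 / (n:ℝ) := by
            rw [Finset.sum_const, nsmul_eq_mul]
        _ ≤ ∑ i ∈ T, ∑ x, (muhat (zhat (i, a)) x - c a x) ^ 2 :=
            Finset.sum_le_sum fun i hi => hwrongsq a _ ((Finset.mem_filter.mp hi).2)
        _ ≤ ∑ i : Fin n, ∑ x, (muhat (zhat (i, a)) x - c a x) ^ 2 :=
            Finset.sum_le_sum_of_subset_of_nonneg (Finset.subset_univ T)
              (fun i _ _ => Stmt6Aux.sum_sq_nonneg _)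
    have h2 : (T.card : ℝ) * (β ^ 2 / n) ≤ 4 * A ^ 2 := h1.trans (hDDa a)
    have h3 : (T.card : ℝ) * β ^ 2 ≤ 4 * A ^ 2 * n := by
      have h4 := mul_le_mul_of_nonneg_right h2 hn0.le
      calc (T.card : ℝ) * β ^ 2 = (T.card : ℝ) * (β ^ 2 / n) * n := by
            field_simp
        _ ≤ _ := h4
    have p1 : (T.card : ℝ) * (32/49) ≤ (T.card : ℝ) * β ^ 2 :=
      mul_le_mul_of_nonneg_left hβsq (Nat.cast_nonneg T.card)
    have p2 : 4 * A ^ 2 * (n:ℝ) ≤ (8/49) * n :=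
      mul_le_mul_of_nonneg_right (by linarith only [hA2le]) hn0.le
    have p3 : (T.card : ℝ) * (32/49) ≤ (8/49) * n := p1.trans (h3.trans p2)
    linarith only [p3]
  -- per-label bound on the matched center
  have hmain : ∀ a : Fin d, (n:ℝ) * (∑ x, (muhat (τ a) x - c a x) ^ 2)
      ≤ (4/3) * ∑ i : Fin n, ∑ x, (muhat (zhat (i, a)) x - c a x) ^ 2 := by
    intro a
    set S := Finset.univ.filter fun i : Fin n => zhat (i, a) = τ a with hS
    have hcard : (S.card : ℝ) + ((Finset.univ.filter fun i : Fin n => zhat (i, a) ≠ τ a).card : ℝ)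
        = (n:ℝ) := by
      have h := Finset.card_filter_add_card_filter_not
        (s := (Finset.univ : Finset (Fin n))) (p := fun i : Fin n => zhat (i, a) = τ a)
      have h' : S.card + (Finset.univ.filter fun i : Fin n => zhat (i, a) ≠ τ a).card = n := by
        simpa [hS, Finset.card_univ] using h
      exact_mod_cast congrArg (Nat.cast : ℕ → ℝ) h'
    have hScard : (3/4) * (n:ℝ) ≤ (S.card : ℝ) := by
      have := hcount a
      linarith only [this, hcard]
    have hsum : (S.card : ℝ) * (∑ x, (muhat (τ a) x - c a x) ^ 2)
        ≤ ∑ i : Fin n, ∑ x, (muhat (zhat (i, a)) x - c a x) ^ 2 := by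
      calc (S.card : ℝ) * (∑ x, (muhat (τ a) x - c a x) ^ 2)
          = ∑ _i ∈ S, ∑ x, (muhat (τ a) x - c a x) ^ 2 := by
            rw [Finset.sum_const, nsmul_eq_mul]
        _ = ∑ i ∈ S, ∑ x, (muhat (zhat (i, a)) x - c a x) ^ 2 :=
            Finset.sum_congr rfl fun i hi => by rw [(Finset.mem_filter.mp hi).2]
        _ ≤ _ := Finset.sum_le_sum_of_subset_of_nonneg (Finset.subset_univ S)
              (fun i _ _ => Stmt6Aux.sum_sq_nonneg _)
    have hq : 0 ≤ ∑ x, (muhat (τ a) x - c a x) ^ 2 := Stmt6Aux.sum_sq_nonneg _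
    nlinarith only [hsum, hScard, hq, hn0]
  -- total bound
  have htot : (n:ℝ) * ∑ a : Fin d, ∑ x, (muhat (τ a) x - c a x) ^ 2 ≤ (16/3) * A ^ 2 := by
    have h1 : ∑ a : Fin d, (n:ℝ) * (∑ x, (muhat (τ a) x - c a x) ^ 2)
        ≤ ∑ a : Fin d, (4/3) * ∑ i : Fin n, ∑ x, (muhat (zhat (i, a)) x - c a x) ^ 2 :=
      Finset.sum_le_sum fun a _ => hmain a
    rw [← Finset.mul_sum, ← Finset.mul_sum, ← hDDsplit] at h1
    linarith only [h1, hDD4]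
  -- the permutation matrix
  refine ⟨Matrix.of (fun b j => if e.symm b = j then (1:ℝ) else 0), ⟨e.symm, fun i j => rfl⟩, ?_⟩
  -- entries of M - P Hᵀ
  have hentryP : ∀ b x, (M - (Matrix.of (fun b j => if e.symm b = j then (1:ℝ) else 0)) * Hᵀ) b x
      = Real.sqrt n * (muhat b x - c (e.symm b) x) := by
    intro b x
    rw [Matrix.sub_apply, hM, Matrix.mul_apply]
    have h1 : ∑ j, (if e.symm b = j then (1:ℝ) else 0) * Hᵀ j x = H x (e.symm b) := by
      rw [Finset.sum_congr rfl (fun j _ =>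
        show (if e.symm b = j then (1:ℝ) else 0) * Hᵀ j x
            = if e.symm b = j then Hᵀ j x else 0 from by rw [ite_mul, one_mul, zero_mul]),
        Finset.sum_ite_eq, if_pos (Finset.mem_univ _)]
      rfl
    have h2 : Real.sqrt n * c (e.symm b) x = H x (e.symm b) := by
      rw [hc]
      field_simp
    rw [show ((Matrix.of (fun b j => if e.symm b = j then (1:ℝ) else 0)) : Matrix (Fin d) (Fin d) ℝ) b
        = fun j => if e.symm b = j then (1:ℝ) else 0 from rfl] at *
    rw [h1, ← h2]
    ring
  have hfrob2 : ∑ b, ∑ x, ((M - (Matrix.of (fun b j => if e.symm b = j then (1:ℝ) else 0)) * Hᵀ) b x) ^ 2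
      = (n:ℝ) * ∑ a : Fin d, ∑ x, (muhat (τ a) x - c a x) ^ 2 := by
    calc ∑ b, ∑ x, ((M - (Matrix.of (fun b j => if e.symm b = j then (1:ℝ) else 0)) * Hᵀ) b x) ^ 2
        = ∑ b, ∑ x, (n:ℝ) * (muhat b x - c (e.symm b) x) ^ 2 := by
          refine Finset.sum_congr rfl fun b _ => Finset.sum_congr rfl fun x _ => ?_
          rw [hentryP b x, mul_pow, Real.sq_sqrt hn0.le]
      _ = (n:ℝ) * ∑ b, ∑ x, (muhat b x - c (e.symm b) x) ^ 2 := by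
          rw [Finset.mul_sum]
          exact Finset.sum_congr rfl fun b _ => (Finset.mul_sum _ _ _).symm
      _ = (n:ℝ) * ∑ a : Fin d, ∑ x, (muhat (τ a) x - c a x) ^ 2 := by
          congr 1
          rw [← Equiv.sum_comp e (fun b => ∑ x, (muhat b x - c (e.symm b) x) ^ 2)]
          refine Finset.sum_congr rfl fun a _ => ?_
          rw [Equiv.symm_apply_apply]
          rfl
  -- final computation
  have hδ : 4 * C₀ * s / Real.sqrt ((n:ℝ) * p) = (7/2) * A := by
    rw [hA]; ring
  unfold frobNorm
  rw [hfrob2]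
  have hle : (n:ℝ) * ∑ a : Fin d, ∑ x, (muhat (τ a) x - c a x) ^ 2
      ≤ ((7/2) * A) ^ 2 := by
    have h49 : (16/3) * A ^ 2 ≤ (49/4) * A ^ 2 := by nlinarith only [sq_nonneg A]
    calc _ ≤ (16/3) * A ^ 2 := htot
      _ ≤ (49/4) * A ^ 2 := h49
      _ = ((7/2) * A) ^ 2 := by ring
  rw [hδ]
  calc Real.sqrt ((n:ℝ) * ∑ a : Fin d, ∑ x, (muhat (τ a) x - c a x) ^ 2)
      ≤ Real.sqrt (((7/2) * A) ^ 2) := Real.sqrt_le_sqrt hle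
    _ = (7/2) * A := Real.sqrt_sq (by positivity)
end

section
/- Fix j ∈ [n]. Assume ‖UUᵀ − U^{(j)}U^{(j)ᵀ}‖ ≤ 6(‖U_jH − U*_j‖ + 1/√n). Then max_{k∈[n]} ‖U^{(j)}_kH^{(j)} − U*_k‖ ≤ 7( max_{k∈[n]} ‖U_kH − U*_k‖ + 1/√n ). -/
open Matrix Real

/-- The `k`-th `d × d` block of an `nd × d` matrix. -/
def blk {n d : ℕ} (k : Fin n) (M : Matrix (Fin n × Fin d) (Fin d) ℝ) :
    Matrix (Fin d) (Fin d) ℝ :=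
  Matrix.of fun a b => M (k, a) b

section helpers
variable {m n : Type*} [Fintype m] [Fintype n]

lemma specSet_nonempty (A : Matrix m n ℝ) :
    {c : ℝ | ∃ x : n → ℝ, (∑ j, (x j) ^ 2) ≤ 1 ∧
      c = Real.sqrt (∑ i, (∑ j, A i j * x j) ^ 2)}.Nonempty :=
  ⟨_, fun _ => 0, by simp, rfl⟩

lemma specSet_bddAbove (A : Matrix m n ℝ) :
    BddAbove {c : ℝ | ∃ x : n → ℝ, (∑ j, (x j) ^ 2) ≤ 1 ∧
      c = Real.sqrt (∑ i, (∑ j, A i j * x j) ^ 2)} := by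
  refine ⟨Real.sqrt (∑ i, ∑ j, A i j ^ 2), ?_⟩
  rintro c ⟨x, hx, rfl⟩
  apply Real.sqrt_le_sqrt
  apply Finset.sum_le_sum
  intro i _
  calc (∑ j, A i j * x j) ^ 2 ≤ (∑ j, A i j ^ 2) * ∑ j, x j ^ 2 :=
        Finset.sum_mul_sq_le_sq_mul_sq _ _ _
    _ ≤ (∑ j, A i j ^ 2) * 1 := by
        apply mul_le_mul_of_nonneg_left hx (Finset.sum_nonneg fun _ _ => sq_nonneg _)
    _ = ∑ j, A i j ^ 2 := mul_one _

lemma le_specNorm (A : Matrix m n ℝ) (x : n → ℝ) (hx : (∑ j, (x j) ^ 2) ≤ 1) :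
    Real.sqrt (∑ i, (∑ j, A i j * x j) ^ 2) ≤ specNorm A :=
  le_csSup (specSet_bddAbove A) ⟨x, hx, rfl⟩

lemma specNorm_le (A : Matrix m n ℝ) {c : ℝ}
    (h : ∀ x : n → ℝ, (∑ j, (x j) ^ 2) ≤ 1 →
      Real.sqrt (∑ i, (∑ j, A i j * x j) ^ 2) ≤ c) : specNorm A ≤ c :=
  csSup_le (specSet_nonempty A) (by rintro _ ⟨x, hx, rfl⟩; exact h x hx)

lemma specNorm_nonneg (A : Matrix m n ℝ) : 0 ≤ specNorm A :=
  le_trans (by simp) (le_specNorm A (fun _ => 0) (by simp))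

lemma sqrt_sum_sq_add_le {ι : Type*} [Fintype ι] (u v : ι → ℝ) :
    Real.sqrt (∑ i, (u i + v i) ^ 2)
      ≤ Real.sqrt (∑ i, u i ^ 2) + Real.sqrt (∑ i, v i ^ 2) := by
  have h := norm_add_le ((WithLp.equiv 2 (ι → ℝ)).symm u) ((WithLp.equiv 2 (ι → ℝ)).symm v)
  simpa [EuclideanSpace.norm_eq] using h

lemma specNorm_add_le (A B : Matrix m n ℝ) :
    specNorm (A + B) ≤ specNorm A + specNorm B := by
  apply specNorm_le
  intro x hx
  have : ∀ i, (∑ j, (A + B) i j * x j) = (∑ j, A i j * x j) + (∑ j, B i j * x j) := by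
    intro i; rw [← Finset.sum_add_distrib]; congr 1; ext j
    simp [Matrix.add_apply, add_mul]
  simp only [this]
  exact le_trans (sqrt_sum_sq_add_le _ _)
    (add_le_add (le_specNorm A x hx) (le_specNorm B x hx))

lemma specNorm_neg (A : Matrix m n ℝ) : specNorm (-A) = specNorm A := by
  unfold specNorm
  congr 1
  ext c
  constructor <;> rintro ⟨x, hx, rfl⟩ <;> refine ⟨x, hx, ?_⟩ <;>
  · congr 1; apply Finset.sum_congr rfl; intro i _
    have : ∑ j, (-A) i j * x j = -∑ j, A i j * x j := by
      simp [Matrix.neg_apply, neg_mul]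
    rw [this, neg_sq]

end helpers

section blkLemmas
variable {n d : ℕ}

lemma blk_mul (k : Fin n) (P : Matrix (Fin n × Fin d) (Fin d) ℝ)
    (Q : Matrix (Fin d) (Fin d) ℝ) : blk k (P * Q) = blk k P * Q := by
  ext a b; simp [blk, Matrix.mul_apply]

lemma specNorm_blk_le (k : Fin n) (M : Matrix (Fin n × Fin d) (Fin d) ℝ) :
    specNorm (blk k M) ≤ specNorm M := by
  apply specNorm_le
  intro x hx
  refine le_trans ?_ (le_specNorm M x hx)
  apply Real.sqrt_le_sqrt
  rw [Fintype.sum_prod_type]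
  exact Finset.single_le_sum
    (f := fun i => ∑ a, (∑ b, M (i, a) b * x b) ^ 2)
    (fun i _ => Finset.sum_nonneg fun _ _ => sq_nonneg _) (Finset.mem_univ k)

lemma specNorm_mul_ustar_le (hn : 0 < n)
    (Ustar : Matrix (Fin n × Fin d) (Fin d) ℝ)
    (hUstar : ∀ q b, Ustar q b = (if q.2 = b then (1 : ℝ) else 0) / Real.sqrt n)
    (M : Matrix (Fin n × Fin d) (Fin n × Fin d) ℝ) :
    specNorm (M * Ustar) ≤ specNorm M := by
  apply specNorm_le
  intro x hx
  set y : Fin n × Fin d → ℝ := fun q => x q.2 / Real.sqrt n with hy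
  have hn' : (0:ℝ) < Real.sqrt n := Real.sqrt_pos.mpr (by exact_mod_cast hn)
  have hyx : (∑ q, y q ^ 2) = ∑ b, x b ^ 2 := by
    rw [Fintype.sum_prod_type]
    have : ∀ i : Fin n, (∑ a, y (i, a) ^ 2) = (∑ a, x a ^ 2) / n := by
      intro i
      rw [Finset.sum_div]
      apply Finset.sum_congr rfl; intro a _
      rw [hy]; rw [div_pow, Real.sq_sqrt (by positivity)]
    simp only [this, Finset.sum_const, Finset.card_univ, Fintype.card_fin, nsmul_eq_mul]
    field_simp
  have hsum : ∀ i, (∑ b, (M * Ustar) i b * x b) = ∑ q, M i q * y q := by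
    intro i
    simp only [Matrix.mul_apply, Finset.sum_mul]
    rw [Finset.sum_comm]
    apply Finset.sum_congr rfl
    intro q _
    rw [show (∑ b, M i q * Ustar q b * x b) = M i q * ∑ b, Ustar q b * x b by
      rw [Finset.mul_sum]; apply Finset.sum_congr rfl; intro b _; ring]
    congr 1
    simp only [hUstar, hy]
    rw [show (∑ b, (if q.2 = b then (1:ℝ) else 0) / Real.sqrt n * x b)
        = ∑ b, (if q.2 = b then x b / Real.sqrt n else 0) by
      apply Finset.sum_congr rfl; intro b _; split <;> simp [div_eq_inv_mul]]
    simp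
  simp only [hsum]
  exact le_specNorm M y (by rw [hyx]; exact hx)

end blkLemmas

/-- blockwise comparison of `U^{(j)}H^{(j)} − U*` with `UH − U*`. -/
theorem stmt_7 (n d : ℕ) (hn : 2 ≤ n) (hd : 1 ≤ d) (j : Fin n)
    (U Uloo : Matrix (Fin n × Fin d) (Fin d) ℝ)
    (hUorth : Uᵀ * U = 1) (hUlooorth : Ulooᵀ * Uloo = 1)
    (Ustar : Matrix (Fin n × Fin d) (Fin d) ℝ)
    (hUstar : ∀ q b, Ustar q b = (if q.2 = b then (1 : ℝ) else 0) / Real.sqrt n)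
    (H Hloo : Matrix (Fin d) (Fin d) ℝ)
    (hH : H = Uᵀ * Ustar) (hHloo : Hloo = Ulooᵀ * Ustar)
    (hyp : specNorm (U * Uᵀ - Uloo * Ulooᵀ)
      ≤ 6 * (specNorm (blk j U * H - blk j Ustar) + 1 / Real.sqrt n)) :
    (⨆ k : Fin n, specNorm (blk k Uloo * Hloo - blk k Ustar))
      ≤ 7 * ((⨆ k : Fin n, specNorm (blk k U * H - blk k Ustar)) + 1 / Real.sqrt n) := by
  have hn0 : 0 < n := lt_of_lt_of_le (by norm_num) hn
  haveI : Nonempty (Fin n) := ⟨⟨0, hn0⟩⟩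
  set D : Matrix (Fin n × Fin d) (Fin n × Fin d) ℝ := Uloo * Ulooᵀ - U * Uᵀ with hD
  set S : ℝ := ⨆ k : Fin n, specNorm (blk k U * H - blk k Ustar) with hS
  set t : ℝ := 1 / Real.sqrt n with ht
  have ht0 : 0 ≤ t := by
    rw [ht]; positivity
  have hbdd : BddAbove (Set.range fun k : Fin n => specNorm (blk k U * H - blk k Ustar)) :=
    Set.Finite.bddAbove (Set.finite_range _)
  have hle_S : ∀ k, specNorm (blk k U * H - blk k Ustar) ≤ S := fun k => le_ciSup hbdd k
  have hS0 : 0 ≤ S := le_trans (specNorm_nonneg _) (hle_S j)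
  -- key matrix identity
  have key : ∀ k : Fin n, blk k Uloo * Hloo - blk k Ustar
      = blk k (D * Ustar) + (blk k U * H - blk k Ustar) := by
    intro k
    have hmat : Uloo * Hloo = D * Ustar + U * H := by
      rw [hH, hHloo, hD, Matrix.sub_mul, ← Matrix.mul_assoc, ← Matrix.mul_assoc]
      abel
    rw [← blk_mul, ← blk_mul, hmat]
    ext a b
    simp [blk, Matrix.add_apply, Matrix.sub_apply]
    ring
  -- bound on specNorm D
  have hDle : specNorm D ≤ 6 * (S + t) := by
    have : specNorm D = specNorm (U * Uᵀ - Uloo * Ulooᵀ) := by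
      rw [hD, show Uloo * Ulooᵀ - U * Uᵀ = -(U * Uᵀ - Uloo * Ulooᵀ) by abel, specNorm_neg]
    rw [this]
    refine le_trans hyp ?_
    have := hle_S j
    nlinarith
  apply ciSup_le
  intro k
  calc specNorm (blk k Uloo * Hloo - blk k Ustar)
      = specNorm (blk k (D * Ustar) + (blk k U * H - blk k Ustar)) := by rw [key k]
    _ ≤ specNorm (blk k (D * Ustar)) + specNorm (blk k U * H - blk k Ustar) :=
        specNorm_add_le _ _
    _ ≤ specNorm (D * Ustar) + S := add_le_add (specNorm_blk_le _ _) (hle_S k)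
    _ ≤ specNorm D + S := by
        have := specNorm_mul_ustar_le hn0 Ustar hUstar D
        linarith
    _ ≤ 6 * (S + t) + S := by linarith
    _ ≤ 7 * (S + t) := by nlinarith
end
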